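/- arXiv:2008.01590 — 2 statements merged into one kernel-verified Lean document; each statement's English description precedes it below -/
import Mathlib

section
/- Let G be a K^1_{1,s}-free graph and let X_i, X_j be disjoint vertex sets such that some vertex d is complete to X_i and anticomplete to X_j. If G[X_i] and G[X_j] are both K_{r-1}-free, then the bipartite graph of edges between X_i and X_j has no induced matching of size R(r-1, R(r-1, s)), where R denotes the Ramsey number. -/
def subdividedStar (s : ℕ) : SimpleGraph (Option (Fin s × Bool)) :=
  SimpleGraph.fromRel (fun x y =>
    (x = none ∧ ∃ i, y = some (i, false)) ∨
    (∃ i, x = some (i, false) ∧ y = some (i, true)))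

def RamseyProp (N k l : ℕ) : Prop :=
  ∀ (V : Type) [Fintype V] (G : SimpleGraph V), N ≤ Fintype.card V →
    (∃ K : Finset V, G.IsNClique k K) ∨
    (∃ I : Finset V, I.card = l ∧ ∀ u ∈ I, ∀ v ∈ I, u ≠ v → ¬ G.Adj u v)

lemma star_adj_none {s : ℕ} (j : Fin s) (c : Bool) :
    (subdividedStar s).Adj none (some (j, c)) ↔ c = false := by
  cases c <;> simp [subdividedStar, SimpleGraph.fromRel_adj]

lemma star_adj_some {s : ℕ} (i j : Fin s) (c c' : Bool) :
    (subdividedStar s).Adj (some (i, c)) (some (j, c')) ↔ i = j ∧ c ≠ c' := by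
  cases c <;> cases c' <;>
    simp [subdividedStar, SimpleGraph.fromRel_adj, eq_comm, and_comm]

theorem stmt_2 {V : Type*} (G : SimpleGraph V) (r s N₁ N : ℕ)
    (hN₁ : RamseyProp N₁ (r - 1) s) (hN : RamseyProp N (r - 1) N₁)
    (hfree : IsEmpty (subdividedStar s ↪g G))
    (Xi Xj : Set V) (hdisj : Disjoint Xi Xj) (d : V) (hd : d ∉ Xi ∪ Xj)
    (hdXi : ∀ v ∈ Xi, G.Adj d v) (hdXj : ∀ v ∈ Xj, ¬ G.Adj d v)
    (hXi : (G.induce Xi).CliqueFree (r - 1))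
    (hXj : (G.induce Xj).CliqueFree (r - 1)) :
    ¬ ∃ (a b : Fin N → V), Function.Injective a ∧ Function.Injective b ∧
        (∀ m, a m ∈ Xi) ∧ (∀ m, b m ∈ Xj) ∧
        (∀ m, G.Adj (a m) (b m)) ∧
        (∀ m n, m ≠ n → ¬ G.Adj (a m) (b n)) := by
  classical
  rintro ⟨a, b, ha, hb, haXi, hbXj, hab, hind⟩
  set H1 : SimpleGraph (Fin N) :=
    { Adj := fun m n => G.Adj (a m) (a n)
      symm := ⟨fun m n h => h.symm⟩
      loopless := ⟨fun m h => G.irrefl h⟩ } with hH1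
  rcases hN (Fin N) H1 (by simp) with ⟨K, hK⟩ | ⟨I, hIcard, hIind⟩
  · refine hXi ((K.image fun m => (⟨a m, haXi m⟩ : Xi))) ⟨?_, ?_⟩
    · rintro x hx y hy hxy
      simp only [Finset.coe_image, Set.mem_image, Finset.mem_coe] at hx hy
      obtain ⟨m, hm, rfl⟩ := hx
      obtain ⟨n, hn, rfl⟩ := hy
      have hmn : m ≠ n := fun h => hxy (by rw [h])
      exact hK.1 hm hn hmn
    · rw [Finset.card_image_of_injective _
        (fun m n h => ha (congrArg Subtype.val h)), hK.2]
  · set H2 : SimpleGraph ↥I :=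
      { Adj := fun m n => G.Adj (b m) (b n)
        symm := ⟨fun m n h => h.symm⟩
        loopless := ⟨fun m h => G.irrefl h⟩ } with hH2
    have hbinj : Function.Injective fun m : ↥I => b ↑m :=
      fun m n h => Subtype.ext (hb h)
    rcases hN₁ ↥I H2 (by simp [hIcard]) with ⟨K, hK⟩ | ⟨J, hJcard, hJind⟩
    · refine hXj ((K.image fun m : ↥I => (⟨b ↑m, hbXj ↑m⟩ : Xj))) ⟨?_, ?_⟩
      · rintro x hx y hy hxy
        simp only [Finset.coe_image, Set.mem_image, Finset.mem_coe] at hx hy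
        obtain ⟨m, hm, rfl⟩ := hx
        obtain ⟨n, hn, rfl⟩ := hy
        have hmn : m ≠ n := fun h => hxy (by rw [h])
        exact hK.1 hm hn hmn
      · rw [Finset.card_image_of_injective _
          (fun m n h => Subtype.ext (hb (congrArg Subtype.val h))), hK.2]
    · have e := J.orderIsoOfFin hJcard
      set g : Fin s → Fin N := fun i => ((e i : ↥I) : Fin N) with hg
      have hgI : ∀ i, g i ∈ I := fun i => (e i : ↥I).2
      have hgJ : ∀ i, (e i : ↥I) ∈ J := fun i => (e i).2
      have hginj : Function.Injective g := fun i j hij =>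
        e.injective (Subtype.ext (Subtype.ext hij))
      have hdai : ∀ m, d ≠ a m := fun m h => hd (Or.inl (h ▸ haXi m))
      have hdbi : ∀ m, d ≠ b m := fun m h => hd (Or.inr (h ▸ hbXj m))
      have habne : ∀ m n, a m ≠ b n := fun m n h =>
        Set.disjoint_left.mp hdisj (haXi m) (h ▸ hbXj n)
      have haa : ∀ i j : Fin s, i ≠ j → ¬ G.Adj (a (g i)) (a (g j)) :=
        fun i j hij => hIind _ (hgI i) _ (hgI j) (fun h => hij (hginj h))
      have hbb : ∀ i j : Fin s, i ≠ j → ¬ G.Adj (b (g i)) (b (g j)) :=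
        fun i j hij => hJind _ (hgJ i) _ (hgJ j)
          (fun h => hij (e.injective (Subtype.ext h)))
      have habij : ∀ i j : Fin s, G.Adj (a (g i)) (b (g j)) ↔ i = j := by
        intro i j
        constructor
        · intro h
          by_contra hij
          exact hind (g i) (g j) (fun hh => hij (hginj hh)) h
        · rintro rfl; exact hab (g i)
      let f : Option (Fin s × Bool) → V := fun x =>
        match x with
        | none => d
        | some (i, false) => a (g i)
        | some (i, true) => b (g i)
      have finj : Function.Injective f := by
        rintro (_ | ⟨i, (_|_)⟩) (_ | ⟨j, (_|_)⟩) h <;> simp only [f] at h ⊢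
        · exact absurd h (hdai (g j))
        · exact absurd h (hdbi (g j))
        · exact absurd h.symm (hdai (g i))
        · exact congrArg (fun k => some (k, false)) (hginj (ha h))
        · exact absurd h (habne _ _)
        · exact absurd h.symm (hdbi (g i))
        · exact absurd h.symm (habne _ _)
        · exact congrArg (fun k => some (k, true)) (hginj (hb h))
      have hrel : ∀ x y, G.Adj (f x) (f y) ↔ (subdividedStar s).Adj x y := by
        rintro (_ | ⟨i, (_|_)⟩) (_ | ⟨j, (_|_)⟩)
        · exact iff_of_false (G.irrefl (v := d)) (SimpleGraph.irrefl _)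
        · exact iff_of_true (hdXi _ (haXi (g j))) ((star_adj_none j false).mpr rfl)
        · exact iff_of_false (hdXj _ (hbXj (g j)))
            (fun h => by simpa using (star_adj_none j true).mp h)
        · exact iff_of_true (hdXi _ (haXi (g i))).symm
            (((subdividedStar s).adj_symm ((star_adj_none i false).mpr rfl)))
        · rw [star_adj_some]
          refine iff_of_false ?_ (by simp)
          intro h
          by_cases hij : i = j
          · exact G.irrefl (hij ▸ h)
          · exact haa i j hij h
        · rw [star_adj_some, habij]
          simp
        · exact iff_of_false (fun h => hdXj _ (hbXj (g i)) h.symm)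
            (fun h => by simpa using (star_adj_none i true).mp h.symm)
        · rw [star_adj_some]
          constructor
          · intro h
            exact ⟨((habij j i).mp h.symm).symm, by simp⟩
          · rintro ⟨rfl, -⟩
            exact (hab (g i)).symm
        · rw [star_adj_some]
          refine iff_of_false ?_ (by simp)
          intro h
          by_cases hij : i = j
          · exact G.irrefl (hij ▸ h)
          · exact hbb i j hij h
      exact hfree.false ⟨⟨f, finj⟩, hrel _ _⟩
end

section
/- For every r ≥ 1, s ≥ 1 and t ≥ 1, every connected (K_{r+1}, K^1_{1,s}, P_t)-free graph has a dominating set of size at most M(r,s,t) = (1 + R(r+1, R(r+1, s)))^t, where R denotes the Ramsey number. -/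
/-- The Ramsey number `R(k, l)`. -/
noncomputable def ramseyNumber (k l : ℕ) : ℕ := sInf {N | RamseyProp N k l}

open Finset SimpleGraph

lemma ramseyProp_subset {N k l : ℕ} (h : RamseyProp N k l) {V : Type*} [Fintype V] [DecidableEq V]
    (G : SimpleGraph V) (S : Finset V) (hc : N ≤ S.card) :
    (∃ K : Finset V, K ⊆ S ∧ G.IsNClique k K) ∨
    (∃ I : Finset V, I ⊆ S ∧ I.card = l ∧ ∀ u ∈ I, ∀ v ∈ I, u ≠ v → ¬ G.Adj u v) := by
  classical
  let e : {x // x ∈ S} ≃ Fin S.card := Fintype.equivFinOfCardEq (Fintype.card_coe S)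
  let f : Fin S.card → V := fun i => ((e.symm i : {x // x ∈ S}) : V)
  have hfinj : Function.Injective f := fun i j hij => by
    apply e.symm.injective; exact Subtype.ext hij
  have hfS : ∀ i, f i ∈ S := fun i => (e.symm i).2
  have := h (Fin S.card) (G.comap f) (by rwa [Fintype.card_fin])
  rcases this with ⟨K, hK⟩ | ⟨I, hIcard, hIind⟩
  · left
    refine ⟨K.image f, ?_, ?_, ?_⟩
    · intro x hx
      obtain ⟨i, _, rfl⟩ := mem_image.mp hx
      exact hfS i
    · intro x hx y hy hxy
      simp only [coe_image, Set.mem_image, mem_coe] at hx hy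
      obtain ⟨i, hi, rfl⟩ := hx
      obtain ⟨j, hj, rfl⟩ := hy
      have hij : i ≠ j := fun hh => hxy (by rw [hh])
      exact hK.1 hi hj hij
    · rw [card_image_of_injective _ hfinj]; exact hK.2
  · right
    refine ⟨I.image f, ?_, ?_, ?_⟩
    · intro x hx
      obtain ⟨i, _, rfl⟩ := mem_image.mp hx
      exact hfS i
    · rw [card_image_of_injective _ hfinj, hIcard]
    · intro u hu v hv huv
      obtain ⟨i, hi, rfl⟩ := mem_image.mp hu
      obtain ⟨j, hj, rfl⟩ := mem_image.mp hv
      exact hIind i hi j hj (fun hh => huv (by rw [hh]))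

lemma ramseyProp_exists (k l : ℕ) : ∃ N, RamseyProp N k l := by
  classical
  induction k generalizing l with
  | zero =>
    exact ⟨0, fun V _ G _ => Or.inl ⟨∅, by simp [SimpleGraph.isNClique_iff,
      SimpleGraph.IsClique]⟩⟩
  | succ k ihk =>
    induction l with
    | zero =>
      exact ⟨0, fun V _ G _ => Or.inr ⟨∅, by simp, by simp⟩⟩
    | succ l ihl =>
      obtain ⟨N₁, hN₁⟩ := ihk (l := l + 1)
      obtain ⟨N₂, hN₂⟩ := ihl
      refine ⟨N₁ + N₂ + 1, ?_⟩
      intro V _ G hcard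
      classical
      have hne : Nonempty V := by
        rw [← Fintype.card_pos_iff]; omega
      obtain ⟨v⟩ := hne
      set A : Finset V := Finset.univ.filter (fun u => G.Adj v u) with hA
      set B : Finset V := Finset.univ.filter (fun u => ¬ G.Adj v u ∧ u ≠ v) with hB
      have hcards : A.card + B.card + 1 = Fintype.card V := by
        have hdisj : Disjoint A B := by
          rw [Finset.disjoint_left]
          intro a ha hb
          simp only [hA, hB, mem_filter] at ha hb
          exact hb.2.1 ha.2
        have hunion : (A ∪ B) = Finset.univ.erase v := by
          ext u
          simp only [hA, hB, mem_union, mem_filter, mem_univ, true_and, mem_erase]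
          constructor
          · rintro (h | ⟨h1, h2⟩)
            · exact ⟨fun hh => G.irrefl (hh ▸ h), trivial⟩
            · exact ⟨h2, trivial⟩
          · rintro ⟨hne, -⟩
            by_cases hadj : G.Adj v u
            · exact Or.inl hadj
            · exact Or.inr ⟨hadj, hne⟩
        have := Finset.card_union_of_disjoint hdisj
        rw [hunion] at this
        rw [Finset.card_erase_of_mem (mem_univ v), Finset.card_univ] at this
        have hpos : 1 ≤ Fintype.card V := Fintype.card_pos_iff.mpr ⟨v⟩
        omega
      by_cases hAc : N₁ ≤ A.card
      · rcases ramseyProp_subset hN₁ G A hAc with ⟨K, hKS, hK⟩ | ⟨I, hIS, hIc, hIind⟩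
        · left
          refine ⟨insert v K, ?_, ?_⟩
          · intro x hx y hy hxy
            simp only [coe_insert, Set.mem_insert_iff] at hx hy
            rcases hx with rfl | hx <;> rcases hy with rfl | hy
            · exact absurd rfl hxy
            · have : y ∈ A := hKS hy
              simpa [hA] using (mem_filter.mp this).2
            · have : x ∈ A := hKS hx
              exact ((mem_filter.mp this).2).symm
            · exact hK.1 hx hy hxy
          · rw [Finset.card_insert_of_notMem, hK.2]
            intro hv
            have : v ∈ A := hKS (by exact_mod_cast hv)
            simp [hA] at this
        · exact Or.inr ⟨I, hIc, hIind⟩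
      · have hBc : N₂ ≤ B.card := by omega
        rcases ramseyProp_subset hN₂ G B hBc with ⟨K, _, hK⟩ | ⟨I, hIS, hIc, hIind⟩
        · exact Or.inl ⟨K, hK⟩
        · right
          have hvI : v ∉ I := by
            intro hv
            have := hIS hv
            simp [hB] at this
          refine ⟨insert v I, ?_, ?_⟩
          · rw [Finset.card_insert_of_notMem hvI, hIc]
          · have hfact : ∀ x ∈ I, ¬ G.Adj v x := by
              intro x hx
              have := hIS hx
              simp only [hB, mem_filter] at this
              exact this.2.1
            intro u hu w hw huw
            rcases mem_insert.mp hu with hu' | hu <;> rcases mem_insert.mp hw with hw' | hw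
            · exact absurd (hu'.trans hw'.symm) huw
            · rw [hu']; exact hfact w hw
            · intro hadj
              exact hfact u hu (by rw [hw'] at hadj; exact hadj.symm)
            · exact hIind u hu w hw huw
  
lemma ramseyProp_ramseyNumber (k l : ℕ) : RamseyProp (ramseyNumber k l) k l := by
  have h := ramseyProp_exists k l
  exact Nat.sInf_mem (s := {N | RamseyProp N k l}) h

lemma subdividedStar_adj {s : ℕ} (x y : Option (Fin s × Bool)) :
    (subdividedStar s).Adj x y ↔
      ((∃ i, x = none ∧ y = some (i, false)) ∨ (∃ i, y = none ∧ x = some (i, false)) ∨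
       (∃ i, x = some (i, false) ∧ y = some (i, true)) ∨
       (∃ i, x = some (i, true) ∧ y = some (i, false))) := by
  unfold subdividedStar
  rw [SimpleGraph.fromRel_adj]
  constructor
  · rintro ⟨hne, (⟨rfl, i, rfl⟩ | ⟨i, rfl, rfl⟩) | (⟨rfl, i, rfl⟩ | ⟨i, rfl, rfl⟩)⟩
    · exact Or.inl ⟨i, rfl, rfl⟩
    · exact Or.inr (Or.inr (Or.inl ⟨i, rfl, rfl⟩))
    · exact Or.inr (Or.inl ⟨i, rfl, rfl⟩)
    · exact Or.inr (Or.inr (Or.inr ⟨i, rfl, rfl⟩))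
  · rintro (⟨i, rfl, rfl⟩ | ⟨i, rfl, rfl⟩ | ⟨i, rfl, rfl⟩ | ⟨i, rfl, rfl⟩)
    · exact ⟨by simp, Or.inl (Or.inl ⟨rfl, i, rfl⟩)⟩
    · exact ⟨by simp, Or.inr (Or.inl ⟨rfl, i, rfl⟩)⟩
    · exact ⟨by simp, Or.inl (Or.inr ⟨i, rfl, rfl⟩)⟩
    · exact ⟨by simp, Or.inr (Or.inr ⟨i, rfl, rfl⟩)⟩

lemma star_embedding {V : Type*} (G : SimpleGraph V) {s : ℕ} (v : V) (a b : Fin s → V)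
    (hainj : Function.Injective a) (hbinj : Function.Injective b)
    (hva : ∀ i, G.Adj v (a i)) (hvb : ∀ i, ¬ G.Adj v (b i)) (hbv : ∀ i, b i ≠ v)
    (hab : ∀ i, G.Adj (a i) (b i))
    (haa : ∀ i j, i ≠ j → ¬ G.Adj (a i) (a j))
    (hbb : ∀ i j, i ≠ j → ¬ G.Adj (b i) (b j))
    (habx : ∀ i j, i ≠ j → ¬ G.Adj (a i) (b j)) :
    Nonempty (subdividedStar s ↪g G) := by
  classical
  have hav : ∀ i, a i ≠ v := fun i h => G.irrefl (h ▸ hva i)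
  have hanb : ∀ i j, a i ≠ b j := by
    intro i j h
    by_cases hij : i = j
    · subst hij; exact G.ne_of_adj (hab i) h
    · exact hvb j (h ▸ hva i)
  let f : Option (Fin s × Bool) → V := fun o =>
    match o with
    | none => v
    | some (i, false) => a i
    | some (i, true) => b i
  have finj : Function.Injective f := by
    rintro (_ | ⟨i, (_|_)⟩) (_ | ⟨j, (_|_)⟩) h <;>
      simp only [f] at h
    · rfl
    · exact absurd h.symm (hav j)
    · exact absurd h.symm (hbv j)
    · exact absurd h (hav i)
    · have := hainj h; rw [this]
    · exact absurd h (hanb i j)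
    · exact absurd h (hbv i)
    · exact absurd h.symm (hanb j i)
    · have := hbinj h; rw [this]
  have rhs_nf : ∀ j : Fin s, (subdividedStar s).Adj none (some (j, false)) := by
    intro j; rw [subdividedStar_adj]; exact Or.inl ⟨j, rfl, rfl⟩
  have rhs_nt : ∀ j : Fin s, ¬ (subdividedStar s).Adj none (some (j, true)) := by
    intro j h; rw [subdividedStar_adj] at h
    rcases h with ⟨k, h1, h2⟩ | ⟨k, h1, h2⟩ | ⟨k, h1, h2⟩ | ⟨k, h1, h2⟩ <;> simp_all
  have rhs_ff : ∀ i j : Fin s, ¬ (subdividedStar s).Adj (some (i, false)) (some (j, false)) := by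
    intro i j h; rw [subdividedStar_adj] at h
    rcases h with ⟨k, h1, h2⟩ | ⟨k, h1, h2⟩ | ⟨k, h1, h2⟩ | ⟨k, h1, h2⟩ <;> simp_all
  have rhs_tt : ∀ i j : Fin s, ¬ (subdividedStar s).Adj (some (i, true)) (some (j, true)) := by
    intro i j h; rw [subdividedStar_adj] at h
    rcases h with ⟨k, h1, h2⟩ | ⟨k, h1, h2⟩ | ⟨k, h1, h2⟩ | ⟨k, h1, h2⟩ <;> simp_all
  have rhs_ft : ∀ i j : Fin s,
      (subdividedStar s).Adj (some (i, false)) (some (j, true)) ↔ i = j := by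
    intro i j
    constructor
    · intro h; rw [subdividedStar_adj] at h
      rcases h with ⟨k, h1, h2⟩ | ⟨k, h1, h2⟩ | ⟨k, h1, h2⟩ | ⟨k, h1, h2⟩ <;> simp_all
    · rintro rfl; rw [subdividedStar_adj]; exact Or.inr (Or.inr (Or.inl ⟨i, rfl, rfl⟩))
  refine ⟨⟨⟨f, finj⟩, ?_⟩⟩
  rintro (_ | ⟨i, (_|_)⟩) (_ | ⟨j, (_|_)⟩)
  · exact iff_of_false G.irrefl (subdividedStar s).irrefl
  · exact iff_of_true (hva j) (rhs_nf j)
  · exact iff_of_false (hvb j) (rhs_nt j)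
  · exact iff_of_true (hva i).symm ((rhs_nf i).symm)
  · refine iff_of_false ?_ (rhs_ff i j)
    by_cases hij : i = j
    · subst hij; exact G.irrefl
    · exact haa i j hij
  · show G.Adj (a i) (b j) ↔ _
    rw [rhs_ft i j]
    constructor
    · intro h; by_contra hij; exact habx i j hij h
    · rintro rfl; exact hab i
  · exact iff_of_false (fun h => hvb i h.symm) (fun h => rhs_nt i h.symm)
  · show G.Adj (b i) (a j) ↔ _
    rw [show (subdividedStar s).Adj (some (i, true)) (some (j, false)) ↔ j = i from
      ⟨fun h => (rhs_ft j i).mp h.symm, fun h => ((rhs_ft j i).mpr h).symm⟩]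
    constructor
    · intro h; by_contra hij; exact habx j i hij h.symm
    · rintro rfl; exact (hab _).symm
  · refine iff_of_false ?_ (rhs_tt i j)
    by_cases hij : i = j
    · subst hij; exact G.irrefl
    · exact hbb i j hij

lemma local_dom {V : Type*} [Fintype V] [DecidableEq V] (G : SimpleGraph V) (r s : ℕ)
    (hK : G.CliqueFree (r + 1)) (hstar : IsEmpty (subdividedStar s ↪g G)) (v : V)
    (B : Finset V)
    (hB : ∀ b ∈ B, b ≠ v ∧ ¬ G.Adj v b ∧ ∃ a, G.Adj v a ∧ G.Adj a b) :
    ∃ X : Finset V, (∀ x ∈ X, G.Adj v x) ∧ (∀ b ∈ B, ∃ x ∈ X, G.Adj x b) ∧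
      X.card ≤ ramseyNumber (r + 1) (ramseyNumber (r + 1) s) := by
  classical
  set R2 := ramseyNumber (r + 1) (ramseyNumber (r + 1) s) with hR2
  set R1 := ramseyNumber (r + 1) s with hR1
  set 𝒳 : Finset (Finset V) :=
    (G.neighborFinset v).powerset.filter (fun X => ∀ b ∈ B, ∃ x ∈ X, G.Adj x b) with h𝒳
  have hmem : G.neighborFinset v ∈ 𝒳 := by
    rw [h𝒳, mem_filter]
    refine ⟨mem_powerset_self _, ?_⟩
    intro b hb
    obtain ⟨-, -, a, hva, hab⟩ := hB b hb
    exact ⟨a, by rwa [mem_neighborFinset], hab⟩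
  obtain ⟨X, hX𝒳, hXmin⟩ := 𝒳.exists_min_image card ⟨_, hmem⟩
  rw [h𝒳, mem_filter, mem_powerset] at hX𝒳
  obtain ⟨hXsub, hXdom⟩ := hX𝒳
  have hXadj : ∀ x ∈ X, G.Adj v x := fun x hx => by
    have := hXsub hx; rwa [mem_neighborFinset] at this
  refine ⟨X, hXadj, hXdom, ?_⟩
  -- privates
  have hpriv : ∀ x ∈ X, ∃ b ∈ B, G.Adj x b ∧ ∀ x' ∈ X, x' ≠ x → ¬ G.Adj x' b := by
    intro x hx
    by_contra hcon
    push_neg at hcon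
    have herase : X.erase x ∈ 𝒳 := by
      rw [h𝒳, mem_filter, mem_powerset]
      refine ⟨(erase_subset x X).trans hXsub, ?_⟩
      intro b hb
      obtain ⟨x₀, hx₀X, hx₀b⟩ := hXdom b hb
      by_cases hxx : x₀ = x
      · subst hxx
        obtain ⟨x', hx'X, hx'ne, hx'b⟩ := hcon b hb hx₀b
        exact ⟨x', mem_erase.mpr ⟨hx'ne, hx'X⟩, hx'b⟩
      · exact ⟨x₀, mem_erase.mpr ⟨hxx, hx₀X⟩, hx₀b⟩
    have h1 := hXmin _ herase
    have h2 := card_erase_of_mem hx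
    have h3 : 0 < X.card := card_pos.mpr ⟨x, hx⟩
    omega
  by_contra hbig
  push_neg at hbig
  have hcard : R2 ≤ X.card := le_of_lt hbig
  rcases ramseyProp_subset (ramseyProp_ramseyNumber (r + 1) R1) G X hcard with
    ⟨K, -, hKcl⟩ | ⟨I, hIX, hIcard, hIind⟩
  · exact hK K hKcl
  -- choose privates for the Ramsey-independent set I
  have hchoice : ∀ x, x ∈ I → ∃ b, b ∈ B ∧ G.Adj x b ∧ ∀ x' ∈ X, x' ≠ x → ¬ G.Adj x' b := by
    intro x hx
    obtain ⟨b, hb, h1, h2⟩ := hpriv x (hIX hx)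
    exact ⟨b, hb, h1, h2⟩
  choose p hpB hpadj hppriv using hchoice
  set P : Finset V := I.attach.image (fun x => p x.1 x.2) with hP
  have hPinj : ∀ (x : {a // a ∈ I}) (y : {a // a ∈ I}),
      p x.1 x.2 = p y.1 y.2 → x = y := by
    rintro ⟨x, hx⟩ ⟨y, hy⟩ h
    have hady : G.Adj y (p y hy) := hpadj y hy
    rw [← h] at hady
    by_contra hne
    have hxy : y ≠ x := fun hh => hne (by simp [hh])
    exact hppriv x hx y (hIX hy) hxy hady
  have hPcard : P.card = R1 := by
    rw [hP, card_image_of_injective _ (fun x y h => hPinj x y h), card_attach, hIcard]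
  have hPB : ∀ q ∈ P, q ∈ B := by
    intro q hq
    rw [hP, mem_image] at hq
    obtain ⟨⟨x, hx⟩, -, rfl⟩ := hq
    exact hpB x hx
  rcases ramseyProp_subset (ramseyProp_ramseyNumber (r + 1) s) G P (le_of_eq hPcard.symm) with
    ⟨K, -, hKcl⟩ | ⟨J, hJP, hJcard, hJind⟩
  · exact hK K hKcl
  -- back-choice: for each b in J pick its x in I
  have hback : ∀ q, q ∈ J → ∃ x, ∃ hx : x ∈ I, p x hx = q := by
    intro q hq
    have := hJP hq
    rw [hP, mem_image] at this
    obtain ⟨⟨x, hx⟩, -, h⟩ := this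
    exact ⟨x, hx, h⟩
  choose qf hqI hqp using hback
  -- enumerate J
  have hJc : Fintype.card {x // x ∈ J} = s := by rw [Fintype.card_coe, hJcard]
  let eJ : {x // x ∈ J} ≃ Fin s := Fintype.equivFinOfCardEq hJc
  let bfun : Fin s → V := fun i => (eJ.symm i : V)
  have hbJ : ∀ i, bfun i ∈ J := fun i => (eJ.symm i).2
  have hbinj : Function.Injective bfun := fun i j h => by
    apply eJ.symm.injective; exact Subtype.ext h
  let afun : Fin s → V := fun i => qf (bfun i) (hbJ i)
  have haI : ∀ i, afun i ∈ I := fun i => hqI (bfun i) (hbJ i)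
  have hpab : ∀ i, p (afun i) (haI i) = bfun i := fun i => hqp (bfun i) (hbJ i)
  have hainj : Function.Injective afun := by
    intro i j h
    apply hbinj
    rw [← hpab i, ← hpab j]
    congr 1
  have habadj : ∀ i, G.Adj (afun i) (bfun i) := by
    intro i
    have := hpadj (afun i) (haI i)
    rwa [hpab i] at this
  have hbB : ∀ i, bfun i ∈ B := fun i => hPB _ (hJP (hbJ i))
  have hstar' := star_embedding G v afun bfun hainj hbinj
    (fun i => (hXadj _ (hIX (haI i))))
    (fun i => ((hB _ (hbB i)).2.1))
    (fun i => ((hB _ (hbB i)).1))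
    habadj
    (fun i j hij => hIind _ (haI i) _ (haI j) (fun h => hij (hainj h)))
    (fun i j hij => hJind _ (hbJ i) _ (hbJ j) (fun h => hij (hbinj h)))
    (fun i j hij => by
      have := hppriv (afun j) (haI j) (afun i) (hIX (haI i))
        (fun h => hij (hainj h))
      rwa [hpab j] at this)
  exact hstar.false hstar'.some


lemma walk_prefix_exists {V : Type*} {G : SimpleGraph V} {u v : V} (p : G.Walk u v) :
    ∀ i : ℕ, ∃ q : G.Walk u (p.getVert i), q.length ≤ i := by
  induction p with
  | nil =>
    intro i
    exact ⟨SimpleGraph.Walk.nil, by simp⟩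
  | cons h q ih =>
    intro i
    cases i with
    | zero => exact ⟨SimpleGraph.Walk.nil.copy rfl (SimpleGraph.Walk.getVert_zero _).symm, by simp⟩
    | succ n =>
      obtain ⟨q', hq'⟩ := ih n
      rw [SimpleGraph.Walk.getVert_cons_succ]
      exact ⟨SimpleGraph.Walk.cons h q', by simpa using Nat.succ_le_succ hq'⟩

lemma walk_suffix_exists {V : Type*} {G : SimpleGraph V} {u v : V} (p : G.Walk u v) :
    ∀ i : ℕ, ∃ q : G.Walk (p.getVert i) v, q.length ≤ p.length - i := by
  induction p with
  | nil =>
    intro i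
    exact ⟨SimpleGraph.Walk.nil, by simp⟩
  | cons h q ih =>
    intro i
    cases i with
    | zero =>
      refine ⟨(SimpleGraph.Walk.cons h q).copy (SimpleGraph.Walk.getVert_zero _).symm rfl, ?_⟩
      simp
    | succ n =>
      obtain ⟨q', hq'⟩ := ih n
      rw [SimpleGraph.Walk.getVert_cons_succ]
      refine ⟨q', ?_⟩
      simp only [SimpleGraph.Walk.length_cons]
      omega

lemma geodesic_getVert_dist {V : Type*} {G : SimpleGraph V} (hconn : G.Connected) {u w : V}
    (p : G.Walk u w) (hp : p.length = G.dist u w) {i : ℕ} (hi : i ≤ p.length) :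
    G.dist u (p.getVert i) = i := by
  obtain ⟨q1, hq1⟩ := walk_prefix_exists p i
  obtain ⟨q2, hq2⟩ := walk_suffix_exists p i
  have h1 : G.dist u (p.getVert i) ≤ i := le_trans (SimpleGraph.dist_le q1) hq1
  have h2 : G.dist (p.getVert i) w ≤ p.length - i := le_trans (SimpleGraph.dist_le q2) hq2
  have h3 := hconn.dist_triangle (u := u) (v := p.getVert i) (w := w)
  omega

lemma diameter_bound {V : Type*} {G : SimpleGraph V} (hconn : G.Connected) {t : ℕ}
    (hpath : IsEmpty (SimpleGraph.pathGraph t ↪g G)) (ht : 1 ≤ t) (u w : V) :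
    G.dist u w + 2 ≤ t := by
  by_contra hcon
  push_neg at hcon
  obtain ⟨p, hp⟩ := hconn.exists_walk_length_eq_dist u w
  have hlen : t ≤ p.length + 1 := by omega
  have hdist : ∀ i : Fin t, G.dist u (p.getVert i) = i := by
    intro i
    exact geodesic_getVert_dist hconn p hp (by omega)
  have finj : Function.Injective (fun i : Fin t => p.getVert i) := by
    intro i j h
    simp only at h
    have h1 := hdist i
    rw [h, hdist j] at h1
    exact Fin.ext h1.symm
  refine hpath.false ⟨⟨fun i : Fin t => p.getVert i, finj⟩, ?_⟩
  intro i j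
  simp only [Function.Embedding.coeFn_mk, SimpleGraph.pathGraph_adj]
  constructor
  · intro h
    have hne : (i : ℕ) ≠ (j : ℕ) := by
      intro hh
      exact G.irrefl ((Fin.ext hh : i = j) ▸ h)
    have h1 : G.dist u (p.getVert j) ≤ G.dist u (p.getVert i) + 1 := by
      have := hconn.dist_triangle (u := u) (v := p.getVert i) (w := p.getVert j)
      have had : G.dist (p.getVert i) (p.getVert j) = 1 := SimpleGraph.dist_eq_one_iff_adj.mpr h
      omega
    have h2 : G.dist u (p.getVert i) ≤ G.dist u (p.getVert j) + 1 := by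
      have := hconn.dist_triangle (u := u) (v := p.getVert j) (w := p.getVert i)
      have had : G.dist (p.getVert j) (p.getVert i) = 1 := SimpleGraph.dist_eq_one_iff_adj.mpr h.symm
      omega
    rw [hdist i, hdist j] at h1 h2
    omega
  · intro h
    rcases h with h | h
    · have : (i : ℕ) < p.length := by omega
      have := p.adj_getVert_succ this
      rwa [h] at this
    · have : (j : ℕ) < p.length := by omega
      have := p.adj_getVert_succ this
      rw [h] at this
      exact this.symm

/-- Every connected `(K_{r+1}, K^1_{1,s}, P_t)`-free graph has a dominating set
of size at most `(1 + R(r+1, R(r+1, s)))^t`. -/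
theorem stmt_6 {V : Type*} [Fintype V] [DecidableEq V] (G : SimpleGraph V)
    (r s t : ℕ) (hr : 1 ≤ r) (hs : 1 ≤ s) (ht : 1 ≤ t)
    (hconn : G.Connected)
    (hK : G.CliqueFree (r + 1))
    (hstar : IsEmpty (subdividedStar s ↪g G))
    (hpath : IsEmpty (SimpleGraph.pathGraph t ↪g G)) :
    ∃ D : Finset V, (∀ v, v ∉ D → ∃ u ∈ D, G.Adj u v) ∧
      D.card ≤ (1 + ramseyNumber (r + 1) (ramseyNumber (r + 1) s)) ^ t := by
  classical
  set R2 := ramseyNumber (r + 1) (ramseyNumber (r + 1) s) with hR2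
  obtain ⟨v0⟩ := hconn.nonempty
  have hloc : ∀ d : V, ∃ X : Finset V,
      (∀ b, b ≠ d → ¬ G.Adj d b → (∃ a, G.Adj d a ∧ G.Adj a b) → ∃ x ∈ X, G.Adj x b) ∧
      X.card ≤ R2 := by
    intro d
    set B : Finset V :=
      univ.filter (fun b => b ≠ d ∧ ¬ G.Adj d b ∧ ∃ a, G.Adj d a ∧ G.Adj a b) with hBdef
    obtain ⟨X, h1, h2, h3⟩ := local_dom G r s hK hstar d B (by
      intro b hb
      rw [hBdef, mem_filter] at hb
      exact hb.2)
    refine ⟨X, ?_, h3⟩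
    intro b hb1 hb2 hb3
    exact h2 b (by rw [hBdef, mem_filter]; exact ⟨mem_univ b, hb1, hb2, hb3⟩)
  choose Xf hXdom hXcard using hloc
  let D : ℕ → Finset V := fun n => Nat.rec {v0} (fun _ Dn => Dn ∪ Dn.biUnion Xf) n
  have hDsucc : ∀ n, D (n + 1) = D n ∪ (D n).biUnion Xf := fun n => rfl
  have hDmono : ∀ n, D n ⊆ D (n + 1) := by
    intro n
    rw [hDsucc]
    exact subset_union_left
  have hDcard : ∀ n, (D n).card ≤ (1 + R2) ^ n := by
    intro n
    induction n with
    | zero => simp [D]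
    | succ n ih =>
      rw [hDsucc]
      calc (D n ∪ (D n).biUnion Xf).card ≤ (D n).card + ((D n).biUnion Xf).card :=
            card_union_le _ _
        _ ≤ (D n).card + ∑ d ∈ D n, (Xf d).card := by
            have := card_biUnion_le (s := D n) (t := Xf)
            omega
        _ ≤ (D n).card + (D n).card * R2 := by
            have : ∑ d ∈ D n, (Xf d).card ≤ (D n).card * R2 := by
              calc ∑ d ∈ D n, (Xf d).card ≤ ∑ _d ∈ D n, R2 :=
                    Finset.sum_le_sum (fun d _ => hXcard d)
                _ = (D n).card * R2 := by rw [Finset.sum_const, smul_eq_mul]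
            omega
        _ = (D n).card * (1 + R2) := by ring
        _ ≤ (1 + R2) ^ n * (1 + R2) := Nat.mul_le_mul_right _ ih
        _ = (1 + R2) ^ (n + 1) := by ring
  have hinv : ∀ n, ∀ w, G.dist v0 w ≤ n + 1 → w ∈ D n ∨ ∃ u ∈ D n, G.Adj u w := by
    intro n
    induction n with
    | zero =>
      intro w hw
      interval_cases h : G.dist v0 w
      · left
        have : v0 = w := (hconn.dist_eq_zero_iff).mp h
        rw [← this]
        exact mem_singleton_self v0
      · right
        exact ⟨v0, mem_singleton_self v0, SimpleGraph.dist_eq_one_iff_adj.mp h⟩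
    | succ n ih =>
      intro w hw
      by_cases hsmall : G.dist v0 w ≤ n + 1
      · rcases ih w hsmall with h | ⟨u, hu, hadj⟩
        · exact Or.inl (hDmono n h)
        · exact Or.inr ⟨u, hDmono n hu, hadj⟩
      push_neg at hsmall
      have hd : G.dist v0 w = n + 2 := by omega
      obtain ⟨p, hp⟩ := hconn.exists_walk_length_eq_dist v0 w
      set u := p.getVert (n + 1) with hu
      have hadj : G.Adj u w := by
        have h1 : n + 1 < p.length := by omega
        have := p.adj_getVert_succ h1
        rwa [show p.getVert (n + 2) = w by
          rw [show n + 2 = p.length by omega]; exact p.getVert_length] at this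
      have hdu : G.dist v0 u ≤ n + 1 := by
        obtain ⟨q, hq⟩ := walk_prefix_exists p (n + 1)
        exact le_trans (SimpleGraph.dist_le q) hq
      rcases ih u hdu with hmem | ⟨d, hd', hadj'⟩
      · exact Or.inr ⟨u, hDmono n hmem, hadj⟩
      · by_cases hwd : w = d
        · exact Or.inl (hDmono n (hwd ▸ hd'))
        by_cases hdw : G.Adj d w
        · exact Or.inr ⟨d, hDmono n hd', hdw⟩
        · obtain ⟨x, hxX, hxw⟩ := hXdom d w hwd hdw ⟨u, hadj', hadj⟩
          right
          refine ⟨x, ?_, hxw⟩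
          rw [hDsucc]
          exact mem_union_right _ (mem_biUnion.mpr ⟨d, hd', hxX⟩)
  refine ⟨D (t - 2), ?_, ?_⟩
  · intro w hw
    have hdist := diameter_bound hconn hpath ht v0 w
    have := hinv (t - 2) w (by omega)
    rcases this with h | h
    · exact absurd h hw
    · exact h
  · calc (D (t - 2)).card ≤ (1 + R2) ^ (t - 2) := hDcard _
      _ ≤ (1 + R2) ^ t := Nat.pow_le_pow_right (by omega) (by omega)
end
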